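/- Let Q be a quiver, α ≥ 1, K = F_q. Then q^{α⟨r,r⟩} · #μ_{Q,r,α}^{-1}(0)(F_q) / #GL(r, O_α)(F_q) = Σ_{[M]} #End(M) / #Aut(M), where the sum is over isomorphism classes of locally free representations of Q over O_α of rank vector r. -/

import Mathlib

/-- A quiver: a set of vertices, a set of arrows, with source and target maps. -/
structure Quiv where
  V : Type
  A : Type
  s : A → V
  t : A → V

/-- The truncated polynomial ring `O_α = K[t]/(t^α)`. -/
abbrev Oalpha (K : Type) [Field K] (α : ℕ) : Type :=
  Polynomial K ⧸ Ideal.span {(Polynomial.X : Polynomial K) ^ α}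

/-- Transport a square matrix along an equality of sizes. -/
def castMat {R : Type} {n m : ℕ} (h : n = m) (A : Matrix (Fin n) (Fin n) R) :
    Matrix (Fin m) (Fin m) R :=
  h ▸ A

/-- The moment map `μ_{Q,r,α} : R(Q̄, r, O_α) → gl(r, O_α)` of the double quiver:
`(x, y) ↦ (Σ_{t(a) = i} x_a y_a − Σ_{s(a) = i} y_a x_a)_i`. -/
noncomputable def momentMap (Q : Quiv) [Fintype Q.A] [DecidableEq Q.V] (r : Q.V → ℕ)
    (R : Type) [CommRing R]
    (x : ∀ a : Q.A, Matrix (Fin (r (Q.t a))) (Fin (r (Q.s a))) R)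
    (y : ∀ a : Q.A, Matrix (Fin (r (Q.s a))) (Fin (r (Q.t a))) R) (i : Q.V) :
    Matrix (Fin (r i)) (Fin (r i)) R :=
  (∑ a : Q.A, if h : Q.t a = i then castMat (congrArg r h) (x a * y a) else 0) -
    (∑ a : Q.A, if h : Q.s a = i then castMat (congrArg r h) (y a * x a) else 0)


open Matrix in
/-- Two points of the representation space `R(Q, r, O_α)` are isomorphic (lie in the
same `GL(r, O_α)`-orbit) if some `g ∈ Π_i GL(r_i, O_α)` transforms one into the
other. -/
def RepIsom (Q : Quiv) (r : Q.V → ℕ) (R : Type) [CommRing R]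
    (x y : ∀ a : Q.A, Matrix (Fin (r (Q.t a))) (Fin (r (Q.s a))) R) : Prop :=
  ∃ g : ∀ i : Q.V, GL (Fin (r i)) R,
    ∀ a : Q.A, y a = (g (Q.t a) : Matrix (Fin (r (Q.t a))) (Fin (r (Q.t a))) R) * x a *
      (↑((g (Q.s a))⁻¹) : Matrix (Fin (r (Q.s a))) (Fin (r (Q.s a))) R)

/-- The endomorphism ring `End(M)` of the representation `M` corresponding to `x`:
tuples of matrices commuting with all the structure maps. -/
def EndOf (Q : Quiv) (r : Q.V → ℕ) (R : Type) [CommRing R]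
    (x : ∀ a : Q.A, Matrix (Fin (r (Q.t a))) (Fin (r (Q.s a))) R) : Type :=
  {φ : ∀ i : Q.V, Matrix (Fin (r i)) (Fin (r i)) R //
    ∀ a : Q.A, φ (Q.t a) * x a = x a * φ (Q.s a)}

open Matrix in
/-- The automorphism group `Aut(M)` of the representation corresponding to `x`:
tuples of invertible matrices commuting with all the structure maps. -/
def AutOf (Q : Quiv) (r : Q.V → ℕ) (R : Type) [CommRing R]
    (x : ∀ a : Q.A, Matrix (Fin (r (Q.t a))) (Fin (r (Q.s a))) R) : Type :=
  {g : ∀ i : Q.V, GL (Fin (r i)) R //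
    ∀ a : Q.A, (g (Q.t a) : Matrix _ _ R) * x a = x a * (g (Q.s a) : Matrix _ _ R)}



open Polynomial Module

noncomputable def oBasis (K : Type) [Field K] (α : ℕ) : Basis (Fin α) K (Oalpha K α) :=
  ((AdjoinRoot.powerBasis (f := (X : Polynomial K) ^ α)
      (pow_ne_zero _ X_ne_zero)).basis).reindex (finCongr (by simp))

noncomputable def oRoot (K : Type) [Field K] (α : ℕ) : Oalpha K α :=
  AdjoinRoot.root ((X : Polynomial K) ^ α)

theorem oBasis_apply (K : Type) [Field K] (α : ℕ) (i : Fin α) :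
    oBasis K α i = oRoot K α ^ (i : ℕ) := by
  show (((AdjoinRoot.powerBasis (f := (X : Polynomial K) ^ α)
      (pow_ne_zero _ X_ne_zero)).basis).reindex (finCongr (by simp)) :
      Basis (Fin α) K (AdjoinRoot ((X : Polynomial K) ^ α))) i
      = AdjoinRoot.root ((X : Polynomial K) ^ α) ^ (i : ℕ)
  rw [Basis.reindex_apply, PowerBasis.basis_eq_pow]
  simp

theorem oRoot_pow_zero (K : Type) [Field K] (α : ℕ) {j : ℕ} (hj : α ≤ j) :
    oRoot K α ^ j = 0 := by
  have h : oRoot K α ^ α = 0 := by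
    have := AdjoinRoot.mk_self (f := (X : Polynomial K) ^ α)
    rw [map_pow] at this
    exact this
  calc oRoot K α ^ j = oRoot K α ^ α * oRoot K α ^ (j - α) := by
        rw [← pow_add]; congr 1; omega
    _ = 0 := by rw [h, zero_mul]

instance oModFinite (K : Type) [Field K] (α : ℕ) : Module.Finite K (Oalpha K α) :=
  Module.Finite.of_basis (oBasis K α)

instance oFree (K : Type) [Field K] (α : ℕ) : Module.Free K (Oalpha K α) :=
  Module.Free.of_basis (oBasis K α)

instance oFinite (K : Type) [Field K] [Finite K] (α : ℕ) : Finite (Oalpha K α) :=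
  Module.finite_of_finite K

theorem oFinrank (K : Type) [Field K] (α : ℕ) : finrank K (Oalpha K α) = α := by
  rw [finrank_eq_card_basis (oBasis K α), Fintype.card_fin]

/-- cardinality of a finite-dimensional module over a finite field -/
theorem card_module (K V : Type) [Field K] [Fintype K] [AddCommGroup V] [Module K V]
    [Module.Finite K V] : Nat.card V = Nat.card K ^ finrank K V := by
  have : Finite V := Module.finite_of_finite K
  have : Fintype V := Fintype.ofFinite V
  rw [Nat.card_eq_fintype_card, Nat.card_eq_fintype_card, card_eq_pow_finrank (K := K) (V := V)]

theorem card_Oalpha (K : Type) [Field K] [Fintype K] (α : ℕ) :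
    Nat.card (Oalpha K α) = Nat.card K ^ α := by
  rw [card_module K (Oalpha K α), oFinrank]

/-- The nondegenerate functional on `O_α`. -/
theorem exists_eps (K : Type) [Field K] (α : ℕ) (hα : 1 ≤ α) :
    ∃ ε : Oalpha K α →ₗ[K] K, ∀ a : Oalpha K α, a ≠ 0 → ∃ c, ε (a * c) ≠ 0 := by
  classical
  set b := oBasis K α with hb
  refine ⟨b.coord ⟨α - 1, by omega⟩, fun a ha => ?_⟩
  have hrepr : b.repr a ≠ 0 := fun h => ha (by simpa [h] using (b.repr.symm_apply_apply a).symm)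
  -- least index with nonzero coordinate
  have hS : (Finset.univ.filter fun i : Fin α => b.repr a i ≠ 0).Nonempty := by
    rcases Finsupp.ne_iff.1 hrepr with ⟨i, hi⟩
    exact ⟨i, by simpa using hi⟩
  set k := (Finset.univ.filter fun i : Fin α => b.repr a i ≠ 0).min' hS with hk
  have hkmem := (Finset.univ.filter fun i : Fin α => b.repr a i ≠ 0).min'_mem hS
  rw [Finset.mem_filter] at hkmem
  have hkne : b.repr a k ≠ 0 := hkmem.2
  have hkmin : ∀ i : Fin α, b.repr a i ≠ 0 → k ≤ i := fun i hi =>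
    Finset.min'_le _ _ (by simpa using hi)
  refine ⟨oRoot K α ^ (α - 1 - (k : ℕ)), ?_⟩
  have expand : a = ∑ i : Fin α, b.repr a i • b i := (b.sum_repr a).symm
  rw [expand, Finset.sum_mul, map_sum]
  have key : ∀ i : Fin α,
      (b.coord ⟨α - 1, by omega⟩) ((b.repr a i • b i) * oRoot K α ^ (α - 1 - (k : ℕ)))
        = if i = k then b.repr a k else 0 := by
    intro i
    rw [smul_mul_assoc, map_smul, oBasis_apply, ← pow_add]
    rcases lt_trichotomy (i : ℕ) (k : ℕ) with h | h | h
    · have h0 : b.repr a i = 0 := by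
        by_contra hne
        exact absurd (hkmin i hne) (by omega)
      rw [h0, zero_smul, if_neg (fun hik => by rw [hik] at h; omega)]
    · have hik : i = k := Fin.ext h
      rw [hik, if_pos rfl]
      have : (k : ℕ) + (α - 1 - (k : ℕ)) = α - 1 := by have := k.isLt; omega
      rw [this]
      have : oRoot K α ^ (α - 1) = b ⟨α - 1, by omega⟩ := by
        rw [oBasis_apply]
      rw [this]
      simp [Basis.coord_apply, Basis.repr_self]
    · have hge : α ≤ (i : ℕ) + (α - 1 - (k : ℕ)) := by have := i.isLt; have := k.isLt; omega
      rw [oRoot_pow_zero K α hge, if_neg (by intro hik; subst hik; omega)]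
      simp
  rw [Finset.sum_congr rfl fun i _ => key i]
  simpa using hkne


theorem trace_single_mul {m n : Type} [Fintype m] [Fintype n] [DecidableEq m] [DecidableEq n]
    {R : Type} [CommRing R] (i : m) (j : n) (c : R) (M : Matrix n m R) :
    Matrix.trace (Matrix.single i j c * M) = c * M j i := by
  simp [Matrix.trace, Matrix.diag, Matrix.mul_apply, Matrix.single, ite_and,
    Finset.sum_ite_eq, Matrix.of_apply]

theorem finrank_ker_adjoint {K Y G Y' : Type} [Field K] [AddCommGroup Y] [Module K Y]
    [AddCommGroup G] [Module K G] [AddCommGroup Y'] [Module K Y']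
    [FiniteDimensional K Y] [FiniteDimensional K G] [FiniteDimensional K Y']
    (L : Y →ₗ[K] G) (A : G →ₗ[K] Y') (TG : G →ₗ[K] Module.Dual K G)
    (TY : Y' →ₗ[K] Module.Dual K Y) (hTG : Function.Bijective TG)
    (hTY : Function.Injective TY)
    (hadj : ∀ φ y, TY (A φ) y = TG φ (L y)) :
    finrank K (LinearMap.ker L) + finrank K G
      = finrank K Y + finrank K (LinearMap.ker A) := by
  have hcomp : TY ∘ₗ A = L.dualMap ∘ₗ TG := by
    apply LinearMap.ext; intro φ; apply LinearMap.ext; intro y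
    simp [hadj φ y]
  have hker1 : LinearMap.ker A = LinearMap.ker (TY ∘ₗ A) := by
    rw [LinearMap.ker_comp, LinearMap.ker_eq_bot.2 hTY]; rfl
  have hker2 : LinearMap.ker A = Submodule.comap TG (LinearMap.ker L.dualMap) := by
    rw [hker1, hcomp, LinearMap.ker_comp]
  set e := LinearEquiv.ofBijective TG hTG with he
  have hfr : finrank K (LinearMap.ker A) = finrank K (LinearMap.ker L.dualMap) := by
    rw [hker2]
    have : Submodule.comap TG (LinearMap.ker L.dualMap)
        = Submodule.map (e.symm : Dual K G →ₗ[K] G) (LinearMap.ker L.dualMap) := by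
      rw [← Submodule.comap_equiv_eq_map_symm]
      congr 1
    rw [this]
    exact LinearEquiv.finrank_map_eq e.symm _
  have h1 := LinearMap.finrank_range_add_finrank_ker L.dualMap
  have h2 := LinearMap.finrank_range_add_finrank_ker L
  rw [LinearMap.finrank_range_dualMap_eq_finrank_range] at h1
  rw [Subspace.dual_finrank_eq] at h1
  omega

section PairT

variable (K : Type) [Field K] [Fintype K] (α : ℕ)
variable {ι : Type} [Fintype ι] (m n : ι → ℕ)
variable (ε : Oalpha K α →ₗ[K] K)

noncomputable def pairT :
    (∀ a, Matrix (Fin (n a)) (Fin (m a)) (Oalpha K α)) →ₗ[K]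
      Module.Dual K (∀ a, Matrix (Fin (m a)) (Fin (n a)) (Oalpha K α)) :=
  LinearMap.mk₂ K
    (fun z v => ε (∑ a, (v a * z a).trace))
    (fun z₁ z₂ v => by
      show ε (∑ a, (v a * (z₁ + z₂) a).trace)
          = ε (∑ a, (v a * z₁ a).trace) + ε (∑ a, (v a * z₂ a).trace)
      rw [← map_add]; congr 1
      rw [← Finset.sum_add_distrib]
      exact Finset.sum_congr rfl fun a _ => by
        rw [Pi.add_apply, Matrix.mul_add, Matrix.trace_add])
    (fun c z v => by
      show ε (∑ a, (v a * (c • z) a).trace) = c • ε (∑ a, (v a * z a).trace)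
      rw [← map_smul]; congr 1
      rw [Finset.smul_sum]
      exact Finset.sum_congr rfl fun a _ => by
        rw [Pi.smul_apply, Matrix.mul_smul, Matrix.trace_smul])
    (fun z v₁ v₂ => by
      show ε (∑ a, ((v₁ + v₂) a * z a).trace)
          = ε (∑ a, (v₁ a * z a).trace) + ε (∑ a, (v₂ a * z a).trace)
      rw [← map_add]; congr 1
      rw [← Finset.sum_add_distrib]
      exact Finset.sum_congr rfl fun a _ => by
        rw [Pi.add_apply, Matrix.add_mul, Matrix.trace_add])
    (fun c z v => by
      show ε (∑ a, ((c • v) a * z a).trace) = c • ε (∑ a, (v a * z a).trace)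
      rw [← map_smul]; congr 1
      rw [Finset.smul_sum]
      exact Finset.sum_congr rfl fun a _ => by
        rw [Pi.smul_apply, Matrix.smul_mul, Matrix.trace_smul])

theorem pairT_apply (z : ∀ a, Matrix (Fin (n a)) (Fin (m a)) (Oalpha K α))
    (v : ∀ a, Matrix (Fin (m a)) (Fin (n a)) (Oalpha K α)) :
    pairT K α m n ε z v = ε (∑ a, (v a * z a).trace) := rfl

theorem pairT_injective (hε : ∀ a : Oalpha K α, a ≠ 0 → ∃ c, ε (a * c) ≠ 0) :
    Function.Injective (pairT K α m n ε) := by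
  classical
  rw [← LinearMap.ker_eq_bot, LinearMap.ker_eq_bot']
  intro z hz
  funext a
  ext p q
  simp only [Pi.zero_apply, Matrix.zero_apply]
  by_contra hne
  obtain ⟨c, hc⟩ := hε _ hne
  apply hc
  have := congrArg (fun ψ => ψ (Pi.single a (Matrix.single q p c))) hz
  simp only [LinearMap.zero_apply, Module.Dual] at this
  rw [pairT_apply] at this
  rw [← mul_comm c]
  rw [← trace_single_mul q p c (z a)]
  rw [← this]
  congr 1
  rw [Finset.sum_eq_single a]
  · rw [Pi.single_eq_same]
  · intro b _ hb
    rw [Pi.single_eq_of_ne hb, Matrix.zero_mul, Matrix.trace_zero]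
  · intro h; exact absurd (Finset.mem_univ a) h

instance piMatFinite {ι : Type} [Fintype ι] (m n : ι → ℕ) (K : Type) [Field K] (α : ℕ) :
    Module.Finite K (∀ a : ι, Matrix (Fin (n a)) (Fin (m a)) (Oalpha K α)) := by
  have : ∀ a : ι, Module.Finite K (Matrix (Fin (n a)) (Fin (m a)) (Oalpha K α)) :=
    fun a => Module.Finite.matrix
  exact Module.Finite.pi

theorem pairT_bijective (hε : ∀ a : Oalpha K α, a ≠ 0 → ∃ c, ε (a * c) ≠ 0) :
    Function.Bijective (pairT K α m n ε) := by
  have hinj := pairT_injective K α m n ε hε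
  refine ⟨hinj, ?_⟩
  rw [← LinearMap.injective_iff_surjective_of_finrank_eq_finrank ?_]
  · exact hinj
  · rw [Subspace.dual_finrank_eq]
    rw [Module.finrank_pi_fintype, Module.finrank_pi_fintype]
    refine Finset.sum_congr rfl fun a _ => ?_
    rw [Module.finrank_matrix, Module.finrank_matrix]
    simp only [Fintype.card_fin]; ring
end PairT

theorem castMat_add {R : Type} [AddCommMonoid R] {n m : ℕ} (h : n = m)
    (A B : Matrix (Fin n) (Fin n) R) :
    castMat h (A + B) = castMat h A + castMat h B := by subst h; rfl

theorem castMat_smul {R S : Type} [SMul S R] {n m : ℕ} (h : n = m) (c : S)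
    (A : Matrix (Fin n) (Fin n) R) :
    castMat h (c • A) = c • castMat h A := by subst h; rfl

theorem castMat_rfl {R : Type} {n : ℕ} (h : n = n) (A : Matrix (Fin n) (Fin n) R) :
    castMat h A = A := rfl

section QuiverPart

variable (K : Type) [Field K] [Fintype K] (α : ℕ)
variable (Q : Quiv) [Fintype Q.V] [Fintype Q.A] [DecidableEq Q.V] (r : Q.V → ℕ)

abbrev XS := ∀ a : Q.A, Matrix (Fin (r (Q.t a))) (Fin (r (Q.s a))) (Oalpha K α)
abbrev YS := ∀ a : Q.A, Matrix (Fin (r (Q.s a))) (Fin (r (Q.t a))) (Oalpha K α)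
abbrev GS := ∀ i : Q.V, Matrix (Fin (r i)) (Fin (r i)) (Oalpha K α)

theorem momentMap_add (x : XS K α Q r) (y y' : YS K α Q r) (i : Q.V) :
    momentMap Q r (Oalpha K α) x (y + y') i
      = momentMap Q r (Oalpha K α) x y i + momentMap Q r (Oalpha K α) x y' i := by
  unfold momentMap
  have h1 : ∀ a : Q.A,
      (if h : Q.t a = i then castMat (congrArg r h) (x a * (y + y') a) else 0)
        = (if h : Q.t a = i then castMat (congrArg r h) (x a * y a) else 0)
          + (if h : Q.t a = i then castMat (congrArg r h) (x a * y' a) else 0) := by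
    intro a
    by_cases h : Q.t a = i
    · rw [dif_pos h, dif_pos h, dif_pos h, Pi.add_apply, Matrix.mul_add, castMat_add]
    · rw [dif_neg h, dif_neg h, dif_neg h, add_zero]
  have h2 : ∀ a : Q.A,
      (if h : Q.s a = i then castMat (congrArg r h) ((y + y') a * x a) else 0)
        = (if h : Q.s a = i then castMat (congrArg r h) (y a * x a) else 0)
          + (if h : Q.s a = i then castMat (congrArg r h) (y' a * x a) else 0) := by
    intro a
    by_cases h : Q.s a = i
    · rw [dif_pos h, dif_pos h, dif_pos h, Pi.add_apply, Matrix.add_mul, castMat_add]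
    · rw [dif_neg h, dif_neg h, dif_neg h, add_zero]
  rw [Finset.sum_congr rfl fun a _ => h1 a, Finset.sum_congr rfl fun a _ => h2 a,
    Finset.sum_add_distrib, Finset.sum_add_distrib]
  abel

theorem momentMap_smul (x : XS K α Q r) (c : K) (y : YS K α Q r) (i : Q.V) :
    momentMap Q r (Oalpha K α) x (c • y) i = c • momentMap Q r (Oalpha K α) x y i := by
  unfold momentMap
  have h1 : ∀ a : Q.A,
      (if h : Q.t a = i then castMat (congrArg r h) (x a * (c • y) a) else 0)
        = c • (if h : Q.t a = i then castMat (congrArg r h) (x a * y a) else 0) := by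
    intro a
    by_cases h : Q.t a = i
    · rw [dif_pos h, dif_pos h, Pi.smul_apply, Matrix.mul_smul, castMat_smul]
    · rw [dif_neg h, dif_neg h, smul_zero]
  have h2 : ∀ a : Q.A,
      (if h : Q.s a = i then castMat (congrArg r h) ((c • y) a * x a) else 0)
        = c • (if h : Q.s a = i then castMat (congrArg r h) (y a * x a) else 0) := by
    intro a
    by_cases h : Q.s a = i
    · rw [dif_pos h, dif_pos h, Pi.smul_apply, Matrix.smul_mul, castMat_smul]
    · rw [dif_neg h, dif_neg h, smul_zero]
  rw [Finset.sum_congr rfl fun a _ => h1 a, Finset.sum_congr rfl fun a _ => h2 a,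
    ← Finset.smul_sum, ← Finset.smul_sum, smul_sub]

noncomputable def momL (x : XS K α Q r) : YS K α Q r →ₗ[K] GS K α Q r where
  toFun y := fun i => momentMap Q r (Oalpha K α) x y i
  map_add' y y' := by funext i; exact momentMap_add K α Q r x y y' i
  map_smul' c y := by funext i; exact momentMap_smul K α Q r x c y i

noncomputable def adjL (x : XS K α Q r) : GS K α Q r →ₗ[K] XS K α Q r where
  toFun φ := fun a => φ (Q.t a) * x a - x a * φ (Q.s a)
  map_add' φ ψ := by
    funext a
    simp only [Pi.add_apply, Matrix.add_mul, Matrix.mul_add]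
    abel
  map_smul' c φ := by
    funext a
    simp only [Pi.smul_apply, Matrix.smul_mul, Matrix.mul_smul, smul_sub, RingHom.id_apply]

theorem adj_key (ε : Oalpha K α →ₗ[K] K) (x : XS K α Q r) (φ : GS K α Q r)
    (y : YS K α Q r) :
    pairT K α (fun a : Q.A => r (Q.s a)) (fun a : Q.A => r (Q.t a)) ε (adjL K α Q r x φ) y
      = pairT K α (fun i : Q.V => r i) (fun i : Q.V => r i) ε φ (momL K α Q r x y) := by
  rw [pairT_apply, pairT_apply]
  congr 1
  have step1 : ∑ i : Q.V, ((momL K α Q r x y) i * φ i).trace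
      = ∑ i : Q.V, ∑ a : Q.A,
          ((if h : Q.t a = i then (castMat (congrArg r h) (x a * y a) * φ i).trace else 0)
            - (if h : Q.s a = i then (castMat (congrArg r h) (y a * x a) * φ i).trace else 0)) := by
    refine Finset.sum_congr rfl fun i _ => ?_
    show (momentMap Q r (Oalpha K α) x y i * φ i).trace = _
    unfold momentMap
    rw [Matrix.sub_mul, Matrix.trace_sub, Finset.sum_mul, Finset.sum_mul,
      Matrix.trace_sum, Matrix.trace_sum, ← Finset.sum_sub_distrib]
    refine Finset.sum_congr rfl fun a _ => ?_
    congr 1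
    · by_cases h : Q.t a = i
      · rw [dif_pos h, dif_pos h]
      · rw [dif_neg h, dif_neg h, Matrix.zero_mul, Matrix.trace_zero]
    · by_cases h : Q.s a = i
      · rw [dif_pos h, dif_pos h]
      · rw [dif_neg h, dif_neg h, Matrix.zero_mul, Matrix.trace_zero]
  rw [step1, Finset.sum_comm]
  refine Finset.sum_congr rfl fun a _ => ?_
  rw [Finset.sum_sub_distrib, Finset.sum_dite_eq, Finset.sum_dite_eq,
    if_pos (Finset.mem_univ _), if_pos (Finset.mem_univ _), castMat_rfl, castMat_rfl]
  show (y a * (φ (Q.t a) * x a - x a * φ (Q.s a))).trace = _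
  rw [Matrix.mul_sub, Matrix.trace_sub, Matrix.mul_assoc (x a) (y a) (φ (Q.t a)),
    Matrix.trace_mul_comm (x a), Matrix.mul_assoc (y a) (φ (Q.t a)) (x a),
    Matrix.mul_assoc (y a) (x a) (φ (Q.s a))]

end QuiverPart

section Counting

variable (K : Type) [Field K] [Fintype K] (α : ℕ)
variable (Q : Quiv) [Fintype Q.V] [Fintype Q.A] [DecidableEq Q.V] (r : Q.V → ℕ)

open LinearMap Module

theorem card_EndOf_eq (x : XS K α Q r) :
    Nat.card (EndOf Q r (Oalpha K α) x)
      = Nat.card ↥(LinearMap.ker (adjL K α Q r x)) := by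
  apply Nat.card_congr
  refine Equiv.subtypeEquivRight fun φ => ?_
  simp only [LinearMap.mem_ker, adjL, LinearMap.coe_mk, AddHom.coe_mk, funext_iff,
    Pi.zero_apply, sub_eq_zero]

theorem card_fiber_eq (x : XS K α Q r) :
    Nat.card {y : YS K α Q r // ∀ i, momentMap Q r (Oalpha K α) x y i = 0}
      = Nat.card ↥(LinearMap.ker (momL K α Q r x)) := by
  apply Nat.card_congr
  refine Equiv.subtypeEquivRight fun y => ?_
  simp only [LinearMap.mem_ker, momL, LinearMap.coe_mk, AddHom.coe_mk, funext_iff,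
    Pi.zero_apply]

theorem finrank_GS : finrank K (GS K α Q r) = α * ∑ i : Q.V, r i * r i := by
  rw [Module.finrank_pi_fintype, Finset.mul_sum]
  refine Finset.sum_congr rfl fun i _ => ?_
  rw [Module.finrank_matrix, oFinrank]
  simp only [Fintype.card_fin]
  ring

theorem finrank_YS : finrank K (YS K α Q r)
    = α * ∑ a : Q.A, r (Q.s a) * r (Q.t a) := by
  rw [Module.finrank_pi_fintype, Finset.mul_sum]
  refine Finset.sum_congr rfl fun a _ => ?_
  rw [Module.finrank_matrix, oFinrank]
  simp only [Fintype.card_fin]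
  ring

theorem fiber_card_mul (hα : 1 ≤ α) (x : XS K α Q r) :
    Nat.card {y : YS K α Q r // ∀ i, momentMap Q r (Oalpha K α) x y i = 0}
        * Nat.card K ^ (α * ∑ i : Q.V, r i * r i)
      = Nat.card K ^ (α * ∑ a : Q.A, r (Q.s a) * r (Q.t a))
        * Nat.card (EndOf Q r (Oalpha K α) x) := by
  obtain ⟨ε, hε⟩ := exists_eps K α hα
  have hTG := pairT_bijective K α (fun i : Q.V => r i) (fun i : Q.V => r i) ε hε
  have hTY := (pairT_bijective K α (fun a : Q.A => r (Q.s a))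
    (fun a : Q.A => r (Q.t a)) ε hε).1
  have hmain := finrank_ker_adjoint (momL K α Q r x) (adjL K α Q r x) _ _ hTG hTY
    (fun φ y => adj_key K α Q r ε x φ y)
  rw [card_fiber_eq, card_EndOf_eq,
    card_module K ↥(LinearMap.ker (momL K α Q r x)),
    card_module K ↥(LinearMap.ker (adjL K α Q r x)),
    ← pow_add, ← pow_add, ← finrank_GS K α Q r, ← finrank_YS K α Q r]
  exact congrArg (Nat.card K ^ ·) hmain

theorem total_count (hα : 1 ≤ α) :
    Nat.card {p : XS K α Q r × YS K α Q r //
        ∀ i : Q.V, momentMap Q r (Oalpha K α) p.1 p.2 i = 0}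
        * Nat.card K ^ (α * ∑ i : Q.V, r i * r i)
      = Nat.card K ^ (α * ∑ a : Q.A, r (Q.s a) * r (Q.t a))
        * ∑ᶠ x : XS K α Q r, Nat.card (EndOf Q r (Oalpha K α) x) := by
  classical
  haveI : Fintype (XS K α Q r) := Fintype.ofFinite _
  haveI : Fintype (YS K α Q r) := Fintype.ofFinite _
  set c1 := Nat.card K ^ (α * ∑ i : Q.V, r i * r i) with hc1
  set c2 := Nat.card K ^ (α * ∑ a : Q.A, r (Q.s a) * r (Q.t a)) with hc2
  rw [Nat.card_congr
    (Equiv.subtypeProdEquivSigmaSubtype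
      (fun (x : XS K α Q r) (y : YS K α Q r) =>
        ∀ i : Q.V, momentMap Q r (Oalpha K α) x y i = 0))]
  rw [finsum_eq_sum_of_fintype fun x : XS K α Q r => Nat.card (EndOf Q r (Oalpha K α) x)]
  rw [Nat.card_eq_fintype_card, Fintype.card_sigma]
  simp only [Finset.sum_mul, Finset.mul_sum]
  refine Finset.sum_congr rfl fun x _ => ?_
  rw [← Nat.card_eq_fintype_card]
  exact fiber_card_mul K α Q r hα x

end Counting

section Helpers
open Matrix
variable {R : Type} [CommRing R] {n m : ℕ}

theorem gl_mul_inv (u : GL (Fin m) R) :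
    (u : Matrix (Fin m) (Fin m) R) * (↑(u⁻¹) : Matrix (Fin m) (Fin m) R) = 1 := by
  rw [← Units.val_mul, mul_inv_cancel, Units.val_one]

theorem gl_inv_mul (u : GL (Fin m) R) :
    (↑(u⁻¹) : Matrix (Fin m) (Fin m) R) * (u : Matrix (Fin m) (Fin m) R) = 1 := by
  rw [← Units.val_mul, inv_mul_cancel, Units.val_one]

theorem gl_mul_inv_cancel_left (u : GL (Fin m) R) (A : Matrix (Fin m) (Fin n) R) :
    (u : Matrix (Fin m) (Fin m) R) * ((↑(u⁻¹) : Matrix (Fin m) (Fin m) R) * A) = A := by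
  rw [← Matrix.mul_assoc, gl_mul_inv, Matrix.one_mul]

theorem gl_inv_mul_cancel_left (u : GL (Fin m) R) (A : Matrix (Fin m) (Fin n) R) :
    (↑(u⁻¹) : Matrix (Fin m) (Fin m) R) * ((u : Matrix (Fin m) (Fin m) R) * A) = A := by
  rw [← Matrix.mul_assoc, gl_inv_mul, Matrix.one_mul]

theorem mat_mul_inv_cancel (A : Matrix (Fin n) (Fin m) R) (u : GL (Fin m) R) :
    A * (u : Matrix (Fin m) (Fin m) R) * (↑(u⁻¹) : Matrix (Fin m) (Fin m) R) = A := by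
  rw [Matrix.mul_assoc, gl_mul_inv, Matrix.mul_one]

theorem mat_mul_inv_cancel' (A : Matrix (Fin n) (Fin m) R) (u : GL (Fin m) R) :
    A * (↑(u⁻¹) : Matrix (Fin m) (Fin m) R) * (u : Matrix (Fin m) (Fin m) R) = A := by
  rw [Matrix.mul_assoc, gl_inv_mul, Matrix.mul_one]

end Helpers

section Orbits
open Matrix

variable (Q : Quiv) [Fintype Q.A] (r : Q.V → ℕ) (R : Type) [CommRing R]

instance repSMul : SMul (∀ i : Q.V, GL (Fin (r i)) R)
    (∀ a : Q.A, Matrix (Fin (r (Q.t a))) (Fin (r (Q.s a))) R) where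
  smul g x := fun a =>
    (g (Q.t a) : Matrix (Fin (r (Q.t a))) (Fin (r (Q.t a))) R) * x a *
      (↑((g (Q.s a))⁻¹) : Matrix (Fin (r (Q.s a))) (Fin (r (Q.s a))) R)

theorem repSMul_def (g : ∀ i : Q.V, GL (Fin (r i)) R)
    (x : ∀ a : Q.A, Matrix (Fin (r (Q.t a))) (Fin (r (Q.s a))) R) (a : Q.A) :
    (g • x) a = (g (Q.t a) : Matrix (Fin (r (Q.t a))) (Fin (r (Q.t a))) R) * x a *
      (↑((g (Q.s a))⁻¹) : Matrix (Fin (r (Q.s a))) (Fin (r (Q.s a))) R) :=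
  rfl

instance repAction : MulAction (∀ i : Q.V, GL (Fin (r i)) R)
    (∀ a : Q.A, Matrix (Fin (r (Q.t a))) (Fin (r (Q.s a))) R) where
  one_smul x := by
    funext a
    rw [repSMul_def]
    simp
  mul_smul g h x := by
    funext a
    rw [repSMul_def, repSMul_def, repSMul_def]
    simp only [Pi.mul_apply, Units.val_mul, _root_.mul_inv_rev, Matrix.mul_assoc]

theorem repIsom_iff_orbit (x y : ∀ a : Q.A, Matrix (Fin (r (Q.t a))) (Fin (r (Q.s a))) R) :
    RepIsom Q r R x y ↔ y ∈ MulAction.orbit (∀ i : Q.V, GL (Fin (r i)) R) x := by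
  constructor
  · rintro ⟨g, hg⟩
    exact ⟨g, funext fun a => (hg a).symm⟩
  · rintro ⟨g, hg⟩
    exact ⟨g, fun a => congrFun hg.symm a⟩

theorem repIsom_equivalence : Equivalence (RepIsom Q r R) := by
  have hs := (MulAction.orbitRel (∀ i : Q.V, GL (Fin (r i)) R)
    (∀ a : Q.A, Matrix (Fin (r (Q.t a))) (Fin (r (Q.s a))) R)).iseqv
  constructor
  · intro x
    exact (repIsom_iff_orbit Q r R x x).2 (MulAction.mem_orbit_self x)
  · intro x y hxy
    rw [repIsom_iff_orbit] at hxy ⊢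
    exact hs.symm hxy
  · intro x y z hxy hyz
    rw [repIsom_iff_orbit] at hxy hyz ⊢
    exact hs.trans hyz hxy

theorem card_AutOf_eq_stab (x : ∀ a : Q.A, Matrix (Fin (r (Q.t a))) (Fin (r (Q.s a))) R) :
    Nat.card (AutOf Q r R x)
      = Nat.card (MulAction.stabilizer (∀ i : Q.V, GL (Fin (r i)) R) x) := by
  apply Nat.card_congr
  refine Equiv.subtypeEquivRight fun g => ?_
  rw [MulAction.mem_stabilizer_iff]
  constructor
  · intro hg
    funext a
    rw [repSMul_def, show (g (Q.t a) : Matrix (Fin (r (Q.t a))) (Fin (r (Q.t a))) R) * x a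
        = x a * (g (Q.s a) : Matrix (Fin (r (Q.s a))) (Fin (r (Q.s a))) R) from hg a,
      mat_mul_inv_cancel]
  · intro hg a
    have h2 := congrFun hg a
    rw [repSMul_def] at h2
    have h3 := congrArg
      (fun M => M * (g (Q.s a) : Matrix (Fin (r (Q.s a))) (Fin (r (Q.s a))) R)) h2
    simp only [Matrix.mul_assoc, gl_mul_inv_cancel_left, gl_inv_mul_cancel_left,
      gl_mul_inv, gl_inv_mul, Matrix.mul_one, Matrix.one_mul] at h3
    exact h3

theorem card_EndOf_smul (g : ∀ i : Q.V, GL (Fin (r i)) R)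
    (x : ∀ a : Q.A, Matrix (Fin (r (Q.t a))) (Fin (r (Q.s a))) R) :
    Nat.card (EndOf Q r R (g • x)) = Nat.card (EndOf Q r R x) := by
  apply Nat.card_congr
  refine ⟨fun φ => ⟨fun i => (↑((g i)⁻¹) : Matrix _ _ R) * φ.1 i * (g i : Matrix _ _ R), ?_⟩,
    fun ψ => ⟨fun i => (g i : Matrix _ _ R) * ψ.1 i * (↑((g i)⁻¹) : Matrix _ _ R), ?_⟩, ?_, ?_⟩
  · intro a
    have hg := φ.2 a
    rw [repSMul_def] at hg
    have h2 := congrArg (fun M =>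
      (↑((g (Q.t a))⁻¹) : Matrix (Fin (r (Q.t a))) (Fin (r (Q.t a))) R) * M
      * (g (Q.s a) : Matrix (Fin (r (Q.s a))) (Fin (r (Q.s a))) R)) hg
    simp only [Matrix.mul_assoc, gl_mul_inv_cancel_left, gl_inv_mul_cancel_left,
      gl_mul_inv, gl_inv_mul, Matrix.mul_one, Matrix.one_mul] at h2 ⊢
    exact h2
  · intro a
    have hg := ψ.2 a
    rw [repSMul_def]
    have h2 := congrArg (fun M =>
      (g (Q.t a) : Matrix (Fin (r (Q.t a))) (Fin (r (Q.t a))) R) * M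
      * (↑((g (Q.s a))⁻¹) : Matrix (Fin (r (Q.s a))) (Fin (r (Q.s a))) R)) hg
    simp only [Matrix.mul_assoc, gl_mul_inv_cancel_left, gl_inv_mul_cancel_left,
      gl_mul_inv, gl_inv_mul, Matrix.mul_one, Matrix.one_mul] at h2 ⊢
    exact h2
  · intro φ
    apply Subtype.ext
    funext i
    simp only [Matrix.mul_assoc, gl_mul_inv_cancel_left, gl_inv_mul_cancel_left,
      gl_mul_inv, gl_inv_mul, Matrix.mul_one, Matrix.one_mul]
  · intro ψ
    apply Subtype.ext
    funext i
    simp only [Matrix.mul_assoc, gl_mul_inv_cancel_left, gl_inv_mul_cancel_left,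
      gl_mul_inv, gl_inv_mul, Matrix.mul_one, Matrix.one_mul]

end Orbits

open Matrix in
/-- For a quiver `Q`, a rank vector `r` and `α ≥ 1` over `K = F_q`:
`q^{α⟨r,r⟩} · #μ_{Q,r,α}^{-1}(0)(F_q) / #GL(r, O_α)(F_q) = Σ_{[M]} #End(M)/#Aut(M)`,
the sum running over the isomorphism classes of locally free representations of `Q`
over `O_α` of rank vector `r`, i.e. over the `GL(r, O_α)`-orbits on `R(Q, r, O_α)`. -/
theorem momentMap_fiber_count_eq_sum_end_div_aut (K : Type) [Field K] [Fintype K]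
    (α : ℕ) (hα : 1 ≤ α) (Q : Quiv) [Fintype Q.V] [Fintype Q.A] [DecidableEq Q.V]
    (r : Q.V → ℕ) :
    (Nat.card K : ℚ) ^ ((α : ℤ) * ((∑ i : Q.V, (r i : ℤ) ^ 2) -
        ∑ a : Q.A, (r (Q.s a) : ℤ) * (r (Q.t a) : ℤ))) *
      (Nat.card {p : (∀ a : Q.A, Matrix (Fin (r (Q.t a))) (Fin (r (Q.s a))) (Oalpha K α)) ×
          (∀ a : Q.A, Matrix (Fin (r (Q.s a))) (Fin (r (Q.t a))) (Oalpha K α)) //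
          ∀ i : Q.V, momentMap Q r (Oalpha K α) p.1 p.2 i = 0} : ℚ) /
      (Nat.card (∀ i : Q.V, GL (Fin (r i)) (Oalpha K α)) : ℚ) =
    ∑ᶠ c : Quot (RepIsom Q r (Oalpha K α)),
      (Nat.card (EndOf Q r (Oalpha K α) c.out) : ℚ) /
        (Nat.card (AutOf Q r (Oalpha K α) c.out) : ℚ) := by
  classical
  haveI : Fintype (XS K α Q r) := Fintype.ofFinite _
  haveI : Fintype (Quot (RepIsom Q r (Oalpha K α))) := Fintype.ofFinite _
  set Γ := ∀ i : Q.V, GL (Fin (r i)) (Oalpha K α) with hΓdef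
  set q : ℚ := (Nat.card K : ℚ) with hqdef
  have hq0 : q ≠ 0 := Nat.cast_ne_zero.2 Nat.card_pos.ne'
  have hΓ0 : (Nat.card Γ : ℚ) ≠ 0 := Nat.cast_ne_zero.2 Nat.card_pos.ne'
  set d1 := ∑ i : Q.V, r i * r i with hd1
  set d2 := ∑ a : Q.A, r (Q.s a) * r (Q.t a) with hd2
  set z := ((α : ℤ) * ((∑ i : Q.V, (r i : ℤ) ^ 2) -
      ∑ a : Q.A, (r (Q.s a) : ℤ) * (r (Q.t a) : ℤ))) with hz
  set S := ∑ x : XS K α Q r, (Nat.card (EndOf Q r (Oalpha K α) x) : ℚ) with hS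
  -- Step A : cast of the total count
  have hA : (Nat.card {p : XS K α Q r × YS K α Q r //
        ∀ i : Q.V, momentMap Q r (Oalpha K α) p.1 p.2 i = 0} : ℚ) * q ^ (α * d1)
      = q ^ (α * d2) * S := by
    have h := total_count K α Q r hα
    rw [finsum_eq_sum_of_fintype] at h
    rw [hS, hqdef]
    exact_mod_cast h
  -- Step B : the zpow identity
  have hzp : q ^ z * q ^ (α * d2) = q ^ (α * d1) := by
    rw [← zpow_natCast q (α * d2), ← zpow_natCast q (α * d1), ← zpow_add₀ hq0]
    congr 1
    have hsq : ∑ i : Q.V, (r i : ℤ) ^ 2 = ∑ i : Q.V, (r i : ℤ) * (r i : ℤ) := by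
      refine Finset.sum_congr rfl fun i _ => ?_
      ring
    rw [hz, hsq, hd1, hd2]
    push_cast
    ring
  have hB : q ^ z * (Nat.card {p : XS K α Q r × YS K α Q r //
        ∀ i : Q.V, momentMap Q r (Oalpha K α) p.1 p.2 i = 0} : ℚ) = S := by
    have hzq : q ^ z = q ^ (α * d1) / q ^ (α * d2) := by
      rw [eq_div_iff (pow_ne_zero _ hq0)]; exact hzp
    rw [hzq, div_mul_eq_mul_div, mul_comm (q ^ (α * d1)), hA, mul_comm,
      mul_div_assoc, div_self (pow_ne_zero _ hq0), mul_one]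
  -- the left-hand side equals S / #Γ
  rw [hB]
  -- Step C : orbit decomposition
  rw [finsum_eq_sum_of_fintype]
  rw [hS, ← Finset.sum_fiberwise Finset.univ
    (fun x : XS K α Q r => Quot.mk (RepIsom Q r (Oalpha K α)) x)
    (fun x => (Nat.card (EndOf Q r (Oalpha K α) x) : ℚ)), Finset.sum_div]
  refine Finset.sum_congr rfl fun c _ => ?_
  -- constant value on the fiber
  have hconst : ∀ x ∈ Finset.univ.filter
      (fun x : XS K α Q r => Quot.mk (RepIsom Q r (Oalpha K α)) x = c),
      (Nat.card (EndOf Q r (Oalpha K α) x) : ℚ)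
        = (Nat.card (EndOf Q r (Oalpha K α) c.out) : ℚ) := by
    intro x hx
    rw [Finset.mem_filter] at hx
    have hqq : Quot.mk (RepIsom Q r (Oalpha K α)) c.out
        = Quot.mk (RepIsom Q r (Oalpha K α)) x := by rw [Quot.out_eq, hx.2]
    have hrel : RepIsom Q r (Oalpha K α) c.out x :=
      ((repIsom_equivalence Q r (Oalpha K α)).eqvGen_iff).1 (Quot.eq.1 hqq)
    obtain ⟨g, hg⟩ := hrel
    have hx2 : x = g • c.out := funext fun a => hg a
    rw [hx2, card_EndOf_smul]
  rw [Finset.sum_congr rfl hconst, Finset.sum_const, nsmul_eq_mul]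
  -- the fiber is the orbit
  haveI : Fintype ↥(MulAction.orbit Γ c.out) := Fintype.ofFinite _
  have hfil : Finset.univ.filter
      (fun x : XS K α Q r => Quot.mk (RepIsom Q r (Oalpha K α)) x = c)
      = (MulAction.orbit Γ c.out).toFinset := by
    ext x
    rw [Finset.mem_filter, Set.mem_toFinset]
    constructor
    · rintro ⟨-, hx⟩
      have hqq : Quot.mk (RepIsom Q r (Oalpha K α)) c.out
          = Quot.mk (RepIsom Q r (Oalpha K α)) x := by rw [Quot.out_eq, hx]
      exact (repIsom_iff_orbit Q r (Oalpha K α) c.out x).1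
        (((repIsom_equivalence Q r (Oalpha K α)).eqvGen_iff).1 (Quot.eq.1 hqq))
    · intro hx
      refine ⟨Finset.mem_univ x, ?_⟩
      have hrel := (repIsom_iff_orbit Q r (Oalpha K α) c.out x).2 hx
      rw [← Quot.out_eq c]
      exact (Quot.eq.2 (Relation.EqvGen.rel _ _ hrel)).symm
  rw [hfil, Set.toFinset_card, ← Nat.card_eq_fintype_card]
  -- orbit-stabilizer
  have hos : Nat.card ↥(MulAction.orbit Γ c.out)
      * Nat.card ↥(MulAction.stabilizer Γ c.out) = Nat.card Γ := by
    rw [← Nat.card_prod]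
    exact Nat.card_congr (MulAction.orbitProdStabilizerEquivGroup Γ c.out)
  have hstab : Nat.card (AutOf Q r (Oalpha K α) c.out)
      = Nat.card ↥(MulAction.stabilizer Γ c.out) :=
    card_AutOf_eq_stab Q r (Oalpha K α) c.out
  have hAut0 : (Nat.card (AutOf Q r (Oalpha K α) c.out) : ℚ) ≠ 0 := by
    haveI : Nonempty (AutOf Q r (Oalpha K α) c.out) :=
      ⟨⟨1, fun a => by
        show (1 : Matrix (Fin (r (Q.t a))) (Fin (r (Q.t a))) (Oalpha K α)) * c.out a
          = c.out a * (1 : Matrix (Fin (r (Q.s a))) (Fin (r (Q.s a))) (Oalpha K α))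
        simp⟩⟩
    haveI : Finite (AutOf Q r (Oalpha K α) c.out) := by
      unfold AutOf; infer_instance
    exact Nat.cast_ne_zero.2 Nat.card_pos.ne'
  have hosQ : (Nat.card ↥(MulAction.orbit Γ c.out) : ℚ)
      * (Nat.card (AutOf Q r (Oalpha K α) c.out) : ℚ) = (Nat.card Γ : ℚ) := by
    rw [hstab]
    exact_mod_cast hos
  rw [div_eq_div_iff hΓ0 hAut0]
  linear_combination (Nat.card (EndOf Q r (Oalpha K α) c.out) : ℚ) * hosQ
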